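/- For the uniform forward kernel p_{t|0}(y|x_0) = α + β·1{y = x_0} with α > 0, β > 0 (and nα + β = 1), fix any state x. The conditional ratios matrix P(x)_{y,x_0} = p_{t|0}(y|x_0)/p_{t|0}(x|x_0) is invertible. -/
import Mathlib


open Finset Matrix

/-- For the uniform forward kernel `p_{t|0}(y|x_0) = α + β·1{y = x_0}` with
`α, β > 0` and `n·α + β = 1`, the conditional ratios matrix
`P(x)_{y,x_0} = p_{t|0}(y|x_0)/p_{t|0}(x|x_0)` is invertible. -/
theorem uniform_ratio_matrix_invertible {X : Type*} [Fintype X] [DecidableEq X]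
    (hcard : 2 ≤ Fintype.card X)
    (α β : ℝ) (hα : 0 < α) (hβ : 0 < β)
    (hnorm : (Fintype.card X : ℝ) * α + β = 1)
    (k : X → X → ℝ)
    (hk : k = fun y x0 => α + if y = x0 then β else 0)
    (x : X)
    (P : Matrix X X ℝ)
    (hP : P = Matrix.of fun y x0 => k y x0 / k x x0) :
    IsUnit P.det := by
  have hkpos : ∀ y x0, 0 < k y x0 := by
    intro y x0; subst hk; dsimp; split <;> positivity
  set K : Matrix X X ℝ := Matrix.of k with hK
  have hPK : P = K * Matrix.diagonal (fun x0 => (k x x0)⁻¹) := by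
    subst hP
    ext y x0
    simp [Matrix.mul_diagonal, div_eq_mul_inv, hK]
  have hKdet : K.det ≠ 0 := by
    have hKform : K = β • (1 + Matrix.replicateCol Unit (fun _ : X => α / β) * Matrix.replicateRow Unit (fun _ : X => (1:ℝ))) := by
      ext y x0
      simp only [hK, hk, Matrix.of_apply, Matrix.smul_apply, Matrix.add_apply,
        Matrix.one_apply, Matrix.mul_apply, Matrix.replicateCol_apply, Matrix.replicateRow_apply,
        Finset.sum_const, Finset.card_univ, Fintype.card_unit, one_smul, smul_eq_mul]
      rcases eq_or_ne y x0 with h | h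
      · simp [h]; field_simp; ring
      · simp [h]; field_simp
    rw [hKform, Matrix.det_smul, Matrix.det_one_add_replicateCol_mul_replicateRow]
    have : (fun _ : X => (1:ℝ)) ⬝ᵥ (fun _ => α / β) = (Fintype.card X : ℝ) * (α / β) := by
      simp [dotProduct, mul_comm]
    rw [this]
    have h1 : (1:ℝ) + (Fintype.card X : ℝ) * (α / β) > 0 := by positivity
    positivity
  rw [hPK, Matrix.det_mul, Matrix.det_diagonal]
  refine (IsUnit.mul ?_ ?_)
  · exact isUnit_iff_ne_zero.mpr hKdet
  · refine isUnit_iff_ne_zero.mpr (Finset.prod_ne_zero_iff.mpr fun x0 _ => ?_)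
    exact inv_ne_zero (hkpos x x0).ne'
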